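/- Let γ : [0, l₀] → ℝⁿ be a C¹ curve parametrized by arc length with respect to a continuous Riemannian metric g₀ on a domain U ⊂ ℝⁿ, and let g₁ be another continuous Riemannian metric on U. Suppose a > 0 satisfies g₀(x)(ξ,ξ) ≥ a·|ξ|² for all x in the image of γ and ξ ∈ ℝⁿ, and that the components satisfy |(g₁)_{mq}(x) − (g₀)_{mq}(x)| ≤ a·δ/n² for all x in the image of γ and all m, q. Then the lengths l₁ of γ in g₁ and l₀ of γ in g₀ satisfy |l₁ − l₀| ≤ δ·l₀. -/

import Mathlib

lemma coord_abs_le_norm {n : ℕ} (ξ : EuclideanSpace ℝ (Fin n)) (m : Fin n) :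
    |ξ m| ≤ ‖ξ‖ := by
  have h : ‖ξ‖ ^ 2 = ∑ i, ξ i ^ 2 := by
    rw [EuclideanSpace.norm_eq, Real.sq_sqrt (by positivity)]
    simp [Real.norm_eq_abs, sq_abs]
  have h2 : ξ m ^ 2 ≤ ‖ξ‖ ^ 2 := by
    rw [h]
    exact Finset.single_le_sum (fun i _ => sq_nonneg (ξ i)) (Finset.mem_univ m)
  calc |ξ m| = Real.sqrt (ξ m ^ 2) := (Real.sqrt_sq_eq_abs _).symm
    _ ≤ Real.sqrt (‖ξ‖ ^ 2) := Real.sqrt_le_sqrt h2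
    _ = ‖ξ‖ := Real.sqrt_sq (norm_nonneg _)

lemma sqrt_sub_one_abs_le (A : ℝ) : |Real.sqrt A - 1| ≤ |A - 1| := by
  rcases le_or_gt A 0 with h | h
  · rw [Real.sqrt_eq_zero'.mpr h]
    rw [abs_of_nonpos (by linarith : (0:ℝ) - 1 ≤ 0), abs_of_nonpos (by linarith : A - 1 ≤ 0)]
    linarith
  · have hs := Real.sq_sqrt h.le
    have hs0 := Real.sqrt_nonneg A
    rw [abs_le]
    constructor <;> nlinarith [abs_nonneg (A - 1), le_abs_self (A - 1), neg_abs_le (A - 1)]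

/-- Length comparison for two continuous Riemannian metrics on a domain of ℝⁿ,
given componentwise closeness and uniform positive-definiteness of `g₀` along
a curve parametrized by `g₀`-arc length.  Here
`Q g x ξ = ∑ m q, g x m q * ξ m * ξ q` is the quadratic form of the metric. -/
theorem length_comparison (n : ℕ)
    (g₀ g₁ : EuclideanSpace ℝ (Fin n) → Fin n → Fin n → ℝ)
    (hg₀c : ∀ m q, Continuous fun x => g₀ x m q)
    (hg₁c : ∀ m q, Continuous fun x => g₁ x m q)
    (l₀ : ℝ) (hl₀ : 0 ≤ l₀)
    (γ : ℝ → EuclideanSpace ℝ (Fin n)) (γ' : ℝ → EuclideanSpace ℝ (Fin n))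
    (hγ : ∀ s ∈ Set.Icc 0 l₀, HasDerivWithinAt γ (γ' s) (Set.Icc 0 l₀) s)
    (hγ'c : ContinuousOn γ' (Set.Icc 0 l₀))
    (harc : ∀ s ∈ Set.Icc 0 l₀,
      (∑ m : Fin n, ∑ q : Fin n, g₀ (γ s) m q * γ' s m * γ' s q) = 1)
    (a δ : ℝ) (ha : 0 < a) (hδ : 0 < δ)
    (hpos : ∀ s ∈ Set.Icc 0 l₀, ∀ ξ : EuclideanSpace ℝ (Fin n),
      a * ‖ξ‖ ^ 2 ≤ ∑ m : Fin n, ∑ q : Fin n, g₀ (γ s) m q * ξ m * ξ q)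
    (hclose : ∀ s ∈ Set.Icc 0 l₀, ∀ m q : Fin n,
      |g₁ (γ s) m q - g₀ (γ s) m q| ≤ a * δ / (n : ℝ) ^ 2) :
    |(∫ s in (0:ℝ)..l₀, Real.sqrt
        (∑ m : Fin n, ∑ q : Fin n, g₁ (γ s) m q * γ' s m * γ' s q)) - l₀|
      ≤ δ * l₀ := by
  rcases eq_or_lt_of_le hl₀ with h0 | h0
  · rw [← h0]
    simp
  -- n ≥ 1
  have hn : 0 < n := by
    by_contra hn
    push_neg at hn
    interval_cases n
    have := harc 0 ⟨le_refl 0, hl₀⟩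
    simp at this
  set F : ℝ → ℝ := fun s => Real.sqrt
      (∑ m : Fin n, ∑ q : Fin n, g₁ (γ s) m q * γ' s m * γ' s q) with hF
  -- pointwise bound
  have key : ∀ s ∈ Set.Icc (0:ℝ) l₀, |F s - 1| ≤ δ := by
    intro s hs
    set A := ∑ m : Fin n, ∑ q : Fin n, g₁ (γ s) m q * γ' s m * γ' s q with hA
    have harc' := harc s hs
    have hbound : |A - 1| ≤ δ := by
      rw [← harc']
      rw [hA]
      simp only [← Finset.sum_sub_distrib]
      have step : ∀ m ∈ Finset.univ, |∑ q : Fin n,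
          (g₁ (γ s) m q * γ' s m * γ' s q - g₀ (γ s) m q * γ' s m * γ' s q)|
          ≤ n * (δ / (n : ℝ) ^ 2) := by
        intro m _
        calc |∑ q : Fin n, (g₁ (γ s) m q * γ' s m * γ' s q - g₀ (γ s) m q * γ' s m * γ' s q)|
            ≤ ∑ q : Fin n, |g₁ (γ s) m q * γ' s m * γ' s q - g₀ (γ s) m q * γ' s m * γ' s q| :=
              Finset.abs_sum_le_sum_abs _ _
          _ ≤ ∑ q : Fin n, (δ / (n : ℝ) ^ 2) := by
              apply Finset.sum_le_sum
              intro q _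
              have h1 : |g₁ (γ s) m q * γ' s m * γ' s q - g₀ (γ s) m q * γ' s m * γ' s q|
                  = |g₁ (γ s) m q - g₀ (γ s) m q| * (|γ' s m| * |γ' s q|) := by
                rw [← abs_mul, ← abs_mul]; ring_nf
              rw [h1]
              have hnsq : a * ‖γ' s‖ ^ 2 ≤ 1 := by
                have := hpos s hs (γ' s); rw [harc'] at this; exact this
              have hmq : |γ' s m| * |γ' s q| ≤ a⁻¹ := by
                have h2 : |γ' s m| * |γ' s q| ≤ ‖γ' s‖ ^ 2 := by
                  have := coord_abs_le_norm (γ' s) m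
                  have := coord_abs_le_norm (γ' s) q
                  nlinarith [abs_nonneg (γ' s m), abs_nonneg (γ' s q), norm_nonneg (γ' s)]
                have h3 : ‖γ' s‖ ^ 2 ≤ a⁻¹ := by
                  rw [← one_div, le_div_iff₀ ha]
                  nlinarith
                linarith
              calc |g₁ (γ s) m q - g₀ (γ s) m q| * (|γ' s m| * |γ' s q|)
                  ≤ (a * δ / (n : ℝ) ^ 2) * a⁻¹ := by
                    apply mul_le_mul (hclose s hs m q) hmq
                      (by positivity) (by positivity)
                _ = δ / (n : ℝ) ^ 2 := by field_simp
          _ = n * (δ / (n : ℝ) ^ 2) := by simp [Finset.sum_const]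
      calc |∑ m : Fin n, ∑ q : Fin n,
            (g₁ (γ s) m q * γ' s m * γ' s q - g₀ (γ s) m q * γ' s m * γ' s q)|
          ≤ ∑ m : Fin n, |∑ q : Fin n,
            (g₁ (γ s) m q * γ' s m * γ' s q - g₀ (γ s) m q * γ' s m * γ' s q)| :=
            Finset.abs_sum_le_sum_abs _ _
        _ ≤ ∑ _m : Fin n, ((n : ℝ) * (δ / (n : ℝ) ^ 2)) := Finset.sum_le_sum step
        _ = δ := by
            simp [Finset.sum_const]
            field_simp
    exact (sqrt_sub_one_abs_le A).trans hbound
  -- continuity of γ, hence of F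
  have hγc : ContinuousOn γ (Set.Icc 0 l₀) := fun s hs =>
    (hγ s hs).continuousWithinAt
  have hFc : ContinuousOn F (Set.Icc 0 l₀) := by
    apply ContinuousOn.sqrt
    apply continuousOn_finset_sum
    intro m _
    apply continuousOn_finset_sum
    intro q _
    exact ((((hg₁c m q).comp_continuousOn hγc).mul
      ((EuclideanSpace.proj m : EuclideanSpace ℝ (Fin n) →L[ℝ] ℝ).continuous.comp_continuousOn hγ'c)).mul
      ((EuclideanSpace.proj q : EuclideanSpace ℝ (Fin n) →L[ℝ] ℝ).continuous.comp_continuousOn hγ'c))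
  have hFint : IntervalIntegrable F MeasureTheory.volume 0 l₀ :=
    (hFc.mono (by rw [Set.uIcc_of_le hl₀])).intervalIntegrable
  have hG : (∫ s in (0:ℝ)..l₀, F s) - l₀ = ∫ s in (0:ℝ)..l₀, (F s - 1) := by
    rw [intervalIntegral.integral_sub hFint intervalIntegrable_const]
    simp
  rw [show |(∫ s in (0:ℝ)..l₀, F s) - l₀| = ‖∫ s in (0:ℝ)..l₀, (F s - 1)‖ by
    rw [hG, Real.norm_eq_abs]]
  calc ‖∫ s in (0:ℝ)..l₀, (F s - 1)‖ ≤ δ * |l₀ - 0| := by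
        apply intervalIntegral.norm_integral_le_of_norm_le_const
        intro s hs
        rw [Set.uIoc_of_le hl₀] at hs
        exact key s ⟨hs.1.le, hs.2⟩
    _ = δ * l₀ := by rw [sub_zero, abs_of_nonneg hl₀]
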